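/- arXiv:2306.10488 — 2 statements merged into one kernel-verified Lean document; each statement's English description precedes it below -/
import Mathlib

section
/- For 0 < α < 2, the function φ ↦ (2 cos(φ/2))^α + (2 sin(φ/2))^α on (0, π) attains its maximum uniquely at φ = π/2. -/
open Real

/-! With `c = 2 cos (φ/2)` and `s = 2 sin (φ/2)` we have `c² + s² = 4`, and the function is
`(c²)^(α/2) + (s²)^(α/2)`. Since `t ↦ t^(α/2)` is strictly concave for `0 < α < 2`, this sum is
strictly below its value `2 · 2^(α/2)` at `c² = s² = 2`, unless `c = s`, i.e. `φ = π/2`. -/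

lemma Real.rpow_add_rpow_lt_two_mul_rpow_midpoint {p a b : ℝ} (hp₀ : 0 < p) (hp₁ : p < 1)
    (ha : 0 ≤ a) (hb : 0 ≤ b) (hab : a ≠ b) :
    a ^ p + b ^ p < 2 * ((a + b) / 2) ^ p := by
  have h := (strictConcaveOn_rpow hp₀ hp₁).2 (Set.mem_Ici.2 ha) (Set.mem_Ici.2 hb) hab
    (by norm_num : (0 : ℝ) < 1 / 2) (by norm_num : (0 : ℝ) < 1 / 2) (by norm_num)
  simp only [smul_eq_mul] at h
  rw [show 1 / 2 * a + 1 / 2 * b = (a + b) / 2 by ring] at h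
  linarith

lemma Real.rpow_eq_sq_rpow_half {x : ℝ} (hx : 0 ≤ x) (α : ℝ) : x ^ α = (x ^ 2) ^ (α / 2) := by
  rw [← rpow_natCast_mul hx]
  congr 1
  push_cast
  ring

lemma Real.two_mul_cos_sq_add_two_mul_sin_sq (x : ℝ) : (2 * cos x) ^ 2 + (2 * sin x) ^ 2 = 4 := by
  nlinarith [sin_sq_add_cos_sq x]

lemma Real.cos_ne_sin_of_ne_pi_div_four {x : ℝ} (hx : x ∈ Set.Icc 0 (π / 2)) (hx' : x ≠ π / 4) :
    cos x ≠ sin x := by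
  intro h
  rw [← cos_pi_div_two_sub] at h
  have := injOn_cos ⟨hx.1, by linarith [hx.2, pi_pos]⟩
    ⟨by linarith [hx.2], by linarith [hx.1, pi_pos]⟩ h
  exact hx' (by linarith)

/-- For `0 < α < 2`, the function `φ ↦ (2 cos (φ/2))^α + (2 sin (φ/2))^α` on `(0, π)`
attains its maximum uniquely at `φ = π/2`. -/
theorem stmt6 (α : ℝ) (hα0 : 0 < α) (hα2 : α < 2) :
    ∀ φ ∈ Set.Ioo (0 : ℝ) π, φ ≠ π / 2 →
      (2 * cos (φ / 2)) ^ α + (2 * sin (φ / 2)) ^ α <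
        (2 * cos (π / 2 / 2)) ^ α + (2 * sin (π / 2 / 2)) ^ α := by
  rintro φ ⟨hφ0, hφπ⟩ hφ
  have hcos : 0 < cos (φ / 2) := cos_pos_of_mem_Ioo ⟨by linarith, by linarith⟩
  have hsin : 0 < sin (φ / 2) := sin_pos_of_pos_of_lt_pi (by linarith) (by linarith)
  have hcs : (2 * cos (φ / 2)) ^ 2 ≠ (2 * sin (φ / 2)) ^ 2 := by
    refine fun h ↦ cos_ne_sin_of_ne_pi_div_four (x := φ / 2) ⟨by linarith, by linarith⟩
      (fun h' ↦ hφ (by linarith)) ?_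
    nlinarith
  have hmax : (2 * cos (π / 2 / 2)) ^ α + (2 * sin (π / 2 / 2)) ^ α = 2 * 2 ^ (α / 2) := by
    rw [show π / 2 / 2 = π / 4 by ring, cos_pi_div_four, sin_pi_div_four,
      show 2 * (√2 / 2) = √2 by ring, rpow_eq_sq_rpow_half (sqrt_nonneg 2), sq_sqrt zero_le_two]
    ring
  rw [hmax, rpow_eq_sq_rpow_half (by positivity : 0 ≤ 2 * cos (φ / 2)),
    rpow_eq_sq_rpow_half (by positivity : 0 ≤ 2 * sin (φ / 2))]
  calc _ < 2 * (((2 * cos (φ / 2)) ^ 2 + (2 * sin (φ / 2)) ^ 2) / 2) ^ (α / 2) :=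
        rpow_add_rpow_lt_two_mul_rpow_midpoint (by linarith) (by linarith) (by positivity)
          (by positivity) hcs
    _ = 2 * 2 ^ (α / 2) := by rw [two_mul_cos_sq_add_two_mul_sin_sq]; norm_num
end

section
/- Let n ≥ 5 and suppose Γ_n = τ(Γ_n°) where Γ_n° is the regular n-gon with edge length 1, τ(v) = Av + b is an affine transformation of ℝ², and Γ_n also has all edges of length 1. Then A is orthogonal, i.e., τ is an isometry, and hence Γ_n is congruent to Γ_n°. -/
/-!
The edges of the regular `n`-gon are the unit vectors in the directions `(2k + 1)π/n + π/2`, so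
three consecutive ones are pairwise non-parallel as soon as `4π/n < π`, i.e. `n ≥ 5`. The
quadratic form `x ↦ ‖A x‖² - ‖x‖²` vanishes on them, and a quadratic form on a plane that
vanishes on three pairwise independent vectors `u`, `v`, `w = αu + βv` is zero: there `αβ ≠ 0`,
so `Q w = αβ · polar Q u v` forces the polar form to vanish on the basis `u, v`.
-/

open Real Module

theorem QuadraticMap.eq_zero_of_finrank_eq_two {K V : Type*} [Field K] [AddCommGroup V]
    [Module K V] (hV : finrank K V = 2) (Q : QuadraticForm K V) {u v w : V}
    (huv : LinearIndependent K ![u, v]) (huw : LinearIndependent K ![u, w])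
    (hvw : LinearIndependent K ![v, w]) (hu : Q u = 0) (hv : Q v = 0) (hw : Q w = 0) :
    Q = 0 := by
  have : FiniteDimensional K V := Module.finite_of_finrank_eq_succ hV
  have hspan : Submodule.span K {u, v} = ⊤ := by
    simpa [Set.pair_comm] using huv.span_eq_top_of_card_eq_finrank' (by simpa using hV.symm)
  have hmem (x : V) : ∃ a b : K, a • u + b • v = x := by
    rw [← Submodule.mem_span_pair, hspan]; trivial
  have hQ (a b : K) : Q (a • u + b • v) = a * b * QuadraticMap.polar Q u v := by
    rw [QuadraticMap.map_add Q, QuadraticMap.map_smul, QuadraticMap.map_smul, hu, hv,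
      QuadraticMap.polar_smul_left, QuadraticMap.polar_smul_right]
    simp [mul_assoc]
  obtain ⟨α, β, rfl⟩ := hmem w
  have hα : α ≠ 0 := by
    rintro rfl
    have := LinearIndependent.pair_iff.mp hvw β (-1) (by simp)
    simp at this
  have hβ : β ≠ 0 := by
    rintro rfl
    have := LinearIndependent.pair_iff.mp huw α (-1) (by simp)
    simp at this
  have hpolar : QuadraticMap.polar Q u v = 0 := by
    rw [hQ] at hw; simpa [hα, hβ] using hw
  ext x
  obtain ⟨a, b, rfl⟩ := hmem x
  simp [hQ, hpolar]

theorem LinearMap.norm_map_eq_of_finrank_eq_two {E F : Type*} [NormedAddCommGroup E]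
    [InnerProductSpace ℝ E] [NormedAddCommGroup F] [InnerProductSpace ℝ F]
    (hE : finrank ℝ E = 2) (A : E →ₗ[ℝ] F) {u v w : E}
    (huv : LinearIndependent ℝ ![u, v]) (huw : LinearIndependent ℝ ![u, w])
    (hvw : LinearIndependent ℝ ![v, w]) (hu : ‖A u‖ = ‖u‖) (hv : ‖A v‖ = ‖v‖)
    (hw : ‖A w‖ = ‖w‖) (x : E) : ‖A x‖ = ‖x‖ := by
  set Q : QuadraticForm ℝ E :=
    LinearMap.BilinMap.toQuadraticMap ((innerₗ F).compl₁₂ A A - innerₗ E)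
  have hQ (y : E) : Q y = ‖A y‖ ^ 2 - ‖y‖ ^ 2 := by
    simp only [Q, LinearMap.BilinMap.toQuadraticMap_apply, LinearMap.sub_apply,
      LinearMap.compl₁₂_apply, innerₗ_apply_apply, real_inner_self_eq_norm_sq]
  have hQ0 : Q = 0 := QuadraticMap.eq_zero_of_finrank_eq_two hE Q huv huw hvw
    (by rw [hQ, hu, sub_self]) (by rw [hQ, hv, sub_self]) (by rw [hQ, hw, sub_self])
  have hx : ‖A x‖ ^ 2 = ‖x‖ ^ 2 := by
    rw [← sub_eq_zero, ← hQ, hQ0]; rfl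
  exact (sq_eq_sq₀ (norm_nonneg _) (norm_nonneg _)).mp hx

noncomputable def unitVec (θ : ℝ) : EuclideanSpace ℝ (Fin 2) := !₂[cos θ, sin θ]

theorem norm_unitVec (θ : ℝ) : ‖unitVec θ‖ = 1 := by
  simp [unitVec, EuclideanSpace.norm_eq, Fin.sum_univ_two]

theorem linearIndependent_unitVec_pair {φ ψ : ℝ} (h : sin (ψ - φ) ≠ 0) :
    LinearIndependent ℝ ![unitVec φ, unitVec ψ] := by
  rw [LinearIndependent.pair_iff]
  intro s t hst
  have h0 := congrArg (· 0) hst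
  have h1 := congrArg (· 1) hst
  simp only [unitVec, PiLp.add_apply, PiLp.smul_apply, PiLp.zero_apply, smul_eq_mul,
    Matrix.cons_val_zero, Matrix.cons_val_one, Matrix.cons_val_fin_one] at h0 h1
  rw [sin_sub] at h
  constructor
  · have hs : s * (sin ψ * cos φ - cos ψ * sin φ) = 0 := by
      linear_combination sin ψ * h0 - cos ψ * h1
    exact (mul_eq_zero.mp hs).resolve_right h
  · have ht : t * (sin ψ * cos φ - cos ψ * sin φ) = 0 := by
      linear_combination cos φ * h1 - sin φ * h0
    exact (mul_eq_zero.mp ht).resolve_right h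

theorem unitVec_add_two_mul_sub (θ α : ℝ) :
    unitVec (θ + 2 * α) - unitVec θ = (2 * sin α) • unitVec (θ + α + π / 2) := by
  ext i
  fin_cases i
  · show cos (θ + 2 * α) - cos θ = 2 * sin α * cos (θ + α + π / 2)
    rw [cos_sub_cos, cos_add_pi_div_two]; ring_nf
  · show sin (θ + 2 * α) - sin θ = 2 * sin α * sin (θ + α + π / 2)
    rw [sin_sub_sin, sin_add_pi_div_two]; ring_nf

theorem regularPolygon_edge_eq_unitVec {n : ℕ} [NeZero n] (hn : 2 ≤ n)
    (P : Fin n → EuclideanSpace ℝ (Fin 2))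
    (hP : ∀ i : Fin n, P i = (WithLp.equiv 2 (Fin 2 → ℝ)).symm
      ![(1 / (2 * sin (π / n))) * cos (2 * π * i / n),
        (1 / (2 * sin (π / n))) * sin (2 * π * i / n)])
    (i : Fin n) (hi : (i : ℕ) + 1 < n) :
    P (i + 1) - P i = unitVec (2 * π * i / n + π / n + π / 2) := by
  have hsin : sin (π / n) ≠ 0 := by
    have : (2 : ℝ) ≤ n := by exact_mod_cast hn
    exact (sin_pos_of_pos_of_lt_pi (by positivity) (div_lt_self pi_pos (by linarith))).ne'
  have hvertex (j : Fin n) : P j = (1 / (2 * sin (π / n))) • unitVec (2 * π * j / n) := by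
    rw [hP]; ext k; fin_cases k <;> simp [unitVec]
  have hangle : 2 * π * ((i + 1 : Fin n) : ℕ) / n = 2 * π * i / n + 2 * (π / n) := by
    rw [Fin.val_add_one_of_lt' hi]; push_cast; ring
  rw [hvertex, hvertex, ← smul_sub, hangle, unitVec_add_two_mul_sub, smul_smul, one_div,
    inv_mul_cancel₀ (mul_ne_zero two_ne_zero hsin), one_smul]

/-- Let `n ≥ 5`, let `P` be the regular `n`-gon with unit edge length (inscribed in a circle
of radius `1/(2 sin (π/n))`), and let `τ v = A v + b` be an affine map of `ℝ²` such that the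
image polygon `τ ∘ P` again has all edges of length `1`. Then `τ` is an isometry; in
particular the image polygon is congruent to the regular one. -/
theorem stmt11 (n : ℕ) [NeZero n] (hn : 5 ≤ n)
    (A : EuclideanSpace ℝ (Fin 2) →ₗ[ℝ] EuclideanSpace ℝ (Fin 2))
    (b : EuclideanSpace ℝ (Fin 2))
    (P : Fin n → EuclideanSpace ℝ (Fin 2))
    (hP : ∀ i : Fin n, P i = (WithLp.equiv 2 (Fin 2 → ℝ)).symm
      ![(1 / (2 * sin (π / n))) * cos (2 * π * i / n),
        (1 / (2 * sin (π / n))) * sin (2 * π * i / n)])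
    (hedge : ∀ i : Fin n, dist (A (P (i + 1)) + b) (A (P i) + b) = 1) :
    ∀ u v : EuclideanSpace ℝ (Fin 2), dist (A u + b) (A v + b) = dist u v := by
  set e : ℕ → EuclideanSpace ℝ (Fin 2) := fun k ↦ unitVec (2 * π * k / n + π / n + π / 2)
  have hedge_norm (k : ℕ) (hk : k + 1 < n) : ‖A (e k)‖ = ‖e k‖ := by
    have h := hedge ⟨k, by omega⟩
    rw [dist_add_right, dist_eq_norm, ← map_sub,
      regularPolygon_edge_eq_unitVec (by omega) P hP _ hk] at h
    rw [h, norm_unitVec]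
  have hindep (k m : ℕ) (hm : 0 < m) (hmn : 2 * m < n) :
      LinearIndependent ℝ ![e k, e (k + m)] := by
    apply linearIndependent_unitVec_pair
    have hdiff : 2 * π * ↑(k + m) / n + π / n + π / 2 - (2 * π * k / n + π / n + π / 2)
        = 2 * π * m / n := by
      push_cast; ring
    have hmn' : (2 * m : ℝ) < n := by exact_mod_cast hmn
    rw [hdiff]
    refine (sin_pos_of_pos_of_lt_pi (by positivity) ?_).ne'
    rw [div_lt_iff₀ (by positivity)]
    nlinarith [pi_pos]
  have hA (x : EuclideanSpace ℝ (Fin 2)) : ‖A x‖ = ‖x‖ :=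
    A.norm_map_eq_of_finrank_eq_two finrank_euclideanSpace_fin
      (hindep 0 1 one_pos (by omega)) (hindep 0 2 two_pos (by omega))
      (hindep 1 1 one_pos (by omega)) (hedge_norm 0 (by omega)) (hedge_norm 1 (by omega))
      (hedge_norm 2 (by omega)) x
  intro u v
  rw [dist_add_right, dist_eq_norm, dist_eq_norm, ← map_sub, hA]
end
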